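/- Let V ⊆ ℝ^n be a regular space with capacity c and f a feasible flow. Then any two shortest augmenting r-paths P, Q for f are conformal, i.e., P_j Q_j ≥ 0 for all j. -/

import Mathlib

open Finset

variable {n : ℕ}

/-- The support of a vector. -/
def supp (x : Fin n → ℝ) : Set (Fin n) := {j | x j ≠ 0}

/-- A nonzero vector of `V` is elementary if no nonzero vector of `V` has support
properly contained in its support. -/
def IsElementary (V : Submodule ℝ (Fin n → ℝ)) (x : Fin n → ℝ) : Prop :=
  x ∈ V ∧ x ≠ 0 ∧ ∀ y ∈ V, y ≠ 0 → ¬ (supp y ⊂ supp x)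

/-- A primitive vector: elementary with entries in `{-1, 0, 1}`. -/
def IsPrimitive (V : Submodule ℝ (Fin n → ℝ)) (x : Fin n → ℝ) : Prop :=
  IsElementary V x ∧ ∀ j, x j ∈ ({-1, 0, 1} : Set ℝ)

/-- `y` conforms to `x`. -/
def Conforms (y x : Fin n → ℝ) : Prop := ∀ j, y j ≠ 0 → y j * x j > 0

/-- A regular space: the kernel of a totally unimodular matrix. -/
def IsRegularSpace (V : Submodule ℝ (Fin n → ℝ)) : Prop :=
  ∃ (m : ℕ) (A : Matrix (Fin m) (Fin n) ℝ),
    A.IsTotallyUnimodular ∧ V = LinearMap.ker A.mulVecLin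

/-- An `r`-path: a primitive vector with value `+1` at `r`. -/
def IsRPath (V : Submodule ℝ (Fin n → ℝ)) (r : Fin n) (P : Fin n → ℝ) : Prop :=
  IsPrimitive V P ∧ P r = 1

/-- Feasibility with respect to capacity `c` (no constraint at `r`). -/
def Feasible (c : Fin n → ℝ) (r : Fin n) (f : Fin n → ℝ) : Prop :=
  ∀ j, j ≠ r → 0 ≤ f j ∧ f j ≤ c j

/-- An `r`-path `P` is augmenting for the flow `f`. -/
def Augmenting (V : Submodule ℝ (Fin n → ℝ)) (c : Fin n → ℝ) (r : Fin n)
    (f P : Fin n → ℝ) : Prop :=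
  IsRPath V r P ∧ ∃ ε : ℝ, 0 < ε ∧ Feasible c r (f + ε • P)

/-- The 1-norm. -/
def onorm (x : Fin n → ℝ) : ℝ := ∑ j, |x j|

/-- A shortest augmenting `r`-path. -/
def ShortestAug (V : Submodule ℝ (Fin n → ℝ)) (c : Fin n → ℝ) (r : Fin n)
    (f P : Fin n → ℝ) : Prop :=
  Augmenting V c r f P ∧ ∀ Q, Augmenting V c r f Q → onorm P ≤ onorm Q

/-- `g` is obtained from `f` by maximal augmentation along `P`. -/
def MaxAug (c : Fin n → ℝ) (r : Fin n) (f P g : Fin n → ℝ) : Prop :=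
  ∃ ε : ℝ, 0 < ε ∧ g = f + ε • P ∧ Feasible c r g ∧
    ∀ ε' : ℝ, ε < ε' → ¬ Feasible c r (f + ε' • P)

/-- A conformal primitive decomposition of `P + Q` in which `M` and `J` are the two
`r`-path summands (`M` playing the role of `P ∧ Q` and `J` of `P ∨ Q`). -/
def MeetJoinDecomp (V : Submodule ℝ (Fin n → ℝ)) (r : Fin n)
    (P Q M J : Fin n → ℝ) : Prop :=
  ∃ (k : ℕ) (p : Fin k → Fin n → ℝ) (a b : Fin k),
    (∀ i, IsPrimitive V (p i)) ∧ (∀ i, Conforms (p i) (P + Q)) ∧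
    (∑ i, p i) = P + Q ∧ a ≠ b ∧ p a = M ∧ p b = J ∧
    p a r = 1 ∧ p b r = 1 ∧ ∀ i, p i r = 1 → i = a ∨ i = b

/-!
If `P` and `Q` had opposite signs at some coordinate, then `|P + Q| < |P| + |Q|`. In a regular
space `P + Q` is a positive combination `∑ αᵢ pᵢ` of primitive vectors conformal to it, so
`|P + Q| = ∑ αᵢ |pᵢ|`. As `(P + Q)_r = 2`, the summands through `r` carry total weight `2`; each is
augmenting, hence at least as long as `P` and as `Q`, and so `∑ αᵢ |pᵢ| ≥ |P| + |Q|`.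

Primitivity of the summands comes from Cramer's rule: the nonzero entries of an elementary vector
in the kernel of a totally unimodular matrix all have the same absolute value.
-/

theorem Conforms.refl (x : Fin n → ℝ) : Conforms x x := fun _ hj => mul_self_pos.mpr hj

theorem Conforms.ne_zero {x y : Fin n → ℝ} (h : Conforms y x) {j : Fin n} (hj : y j ≠ 0) :
    x j ≠ 0 := fun hx => by simpa [hx] using h j hj

theorem Conforms.supp_subset {x y : Fin n → ℝ} (h : Conforms y x) : supp y ⊆ supp x :=
  fun _ hj => h.ne_zero hj

theorem Conforms.trans {x y z : Fin n → ℝ} (hyx : Conforms y x) (hxz : Conforms x z) :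
    Conforms y z := fun j hj => by
  have h₁ := hyx j hj
  have h₂ := hxz j (hyx.ne_zero hj)
  nlinarith [mul_pos h₁ h₂, mul_self_nonneg (x j)]

theorem Conforms.smul_left {x y : Fin n → ℝ} (h : Conforms y x) {a : ℝ} (ha : 0 < a) :
    Conforms (a • y) x := fun j hj => by
  simp only [Pi.smul_apply, smul_eq_mul] at hj ⊢
  rw [mul_assoc]
  exact mul_pos ha (h j (right_ne_zero_of_mul hj))

theorem conforms_of_mul_nonneg {x y : Fin n → ℝ} (h : ∀ j, 0 ≤ y j * x j)
    (hsupp : supp y ⊆ supp x) : Conforms y x :=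
  fun j hj => (h j).lt_of_ne' (mul_ne_zero hj (hsupp hj))

theorem supp_smul {x : Fin n → ℝ} {a : ℝ} (ha : a ≠ 0) : supp (a • x) = supp x := by
  ext j
  simp [supp, ha]

/-- `t` is the largest multiple for which `x - t • z` stays in the closed orthant of `x`; it kills
the coordinate where `x j / z j` is minimal. -/
theorem exists_conforms_sub_smul {x z : Fin n → ℝ} (hzx : supp z ⊆ supp x) {j₀ : Fin n}
    (hj₀ : 0 < z j₀ * x j₀) :
    ∃ t : ℝ, 0 < t ∧ Conforms (x - t • z) x ∧ supp (x - t • z) ⊂ supp x := by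
  classical
  set D := univ.filter fun j => 0 < z j * x j
  obtain ⟨m, hmD, hmin⟩ := D.exists_min_image (fun j => x j / z j) ⟨j₀, by simpa [D] using hj₀⟩
  have hm : 0 < z m * x m := (mem_filter.mp hmD).2
  have hzm : z m ≠ 0 := left_ne_zero_of_mul hm.ne'
  set t := x m / z m
  have ht : 0 < t := by
    rcases mul_pos_iff.mp hm with ⟨h₁, h₂⟩ | ⟨h₁, h₂⟩
    exacts [div_pos h₂ h₁, div_pos_of_neg_of_neg h₂ h₁]
  have hnonneg : ∀ j, 0 ≤ (x - t • z) j * x j := by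
    intro j
    have hexp : (x - t • z) j * x j = x j * x j - t * (z j * x j) := by
      simp only [Pi.sub_apply, Pi.smul_apply, smul_eq_mul]; ring
    rw [hexp]
    rcases le_or_gt (z j * x j) 0 with hj | hj
    · nlinarith [mul_self_nonneg (x j)]
    · have hle : t ≤ x j / z j := hmin j (by simpa [D] using hj)
      have hcancel : x j / z j * (z j * x j) = x j * x j := by
        field_simp [left_ne_zero_of_mul hj.ne']
      nlinarith
  have hsupp : supp (x - t • z) ⊆ supp x := fun j hj hx => hj (by
    have : z j = 0 := by_contra fun hz => hzx hz hx
    simp [hx, this])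
  refine ⟨t, ht, conforms_of_mul_nonneg hnonneg hsupp, hsupp.ssubset_of_not_subset fun h => ?_⟩
  exact h (right_ne_zero_of_mul hm.ne') (by simp [t, div_mul_cancel₀ _ hzm])

theorem exists_isElementary_conforms (V : Submodule ℝ (Fin n → ℝ)) {x : Fin n → ℝ}
    (hx : x ∈ V) (hx0 : x ≠ 0) : ∃ e, IsElementary V e ∧ Conforms e x := by
  induction hs : supp x using WellFoundedLT.induction generalizing x with
  | ind s ih =>
  by_cases hel : ∀ z ∈ V, z ≠ 0 → ¬ supp z ⊂ supp x
  · exact ⟨x, ⟨hx, hx0, hel⟩, Conforms.refl x⟩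
  simp only [not_forall, not_not] at hel
  obtain ⟨z, hzV, hz0, hzx⟩ := hel
  obtain ⟨j₀, hj₀⟩ := Function.ne_iff.mp hz0
  obtain ⟨w, hwV, hwz, hw⟩ : ∃ w ∈ V, supp w = supp z ∧ 0 < w j₀ * x j₀ := by
    rcases (mul_ne_zero hj₀ (hzx.subset hj₀)).lt_or_gt with h | h
    · exact ⟨-z, neg_mem hzV, by ext; simp [supp], by simpa using h⟩
    · exact ⟨z, hzV, rfl, h⟩
  obtain ⟨t, -, hconf, hlt⟩ := exists_conforms_sub_smul (hwz ▸ hzx.subset) hw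
  obtain ⟨j₁, hj₁x, hj₁z⟩ := Set.exists_of_ssubset hzx
  have hw₁ : w j₁ = 0 := by_contra fun h => hj₁z (hwz ▸ h)
  have hne : x - t • w ≠ 0 := fun h => hj₁x (by simpa [hw₁] using congrFun h j₁)
  obtain ⟨e, he, hex⟩ := ih _ (hs ▸ hlt) (sub_mem hx (V.smul_mem t hwV)) hne rfl
  exact ⟨e, he, hex.trans hconf⟩

def HasConformalDecomp (S : (Fin n → ℝ) → Prop) (x : Fin n → ℝ) : Prop :=
  ∃ (k : ℕ) (α : Fin k → ℝ) (p : Fin k → Fin n → ℝ),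
    (∀ i, 0 < α i ∧ S (p i) ∧ Conforms (p i) x) ∧ ∑ i, α i • p i = x

theorem hasConformalDecomp_isElementary (V : Submodule ℝ (Fin n → ℝ)) {x : Fin n → ℝ}
    (hx : x ∈ V) : HasConformalDecomp (IsElementary V) x := by
  induction hs : supp x using WellFoundedLT.induction generalizing x with
  | ind s ih =>
  rcases eq_or_ne x 0 with rfl | hx0
  · exact ⟨0, Fin.elim0, Fin.elim0, fun i => i.elim0, by simp⟩
  obtain ⟨e, he, hex⟩ := exists_isElementary_conforms V hx hx0
  obtain ⟨j₀, hj₀⟩ := Function.ne_iff.mp he.2.1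
  obtain ⟨t, ht, hconf, hlt⟩ := exists_conforms_sub_smul hex.supp_subset (hex j₀ hj₀)
  obtain ⟨k, α, p, hp, hsum⟩ := ih _ (hs ▸ hlt) (sub_mem hx (V.smul_mem t he.1)) rfl
  refine ⟨k + 1, Fin.cons t α, Fin.cons e p,
    Fin.cases ⟨ht, he, hex⟩ fun i => ⟨(hp i).1, (hp i).2.1, (hp i).2.2.trans hconf⟩, ?_⟩
  simp [Fin.sum_univ_succ, hsum]

namespace Matrix

variable {κ ι : Type*}

theorem IsTotallyUnimodular.abs_det_submatrix_eq_one {A : Matrix κ ι ℝ}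
    (hA : A.IsTotallyUnimodular) {τ : Type*} [Fintype τ] [DecidableEq τ] {f : τ → κ}
    {g : τ → ι} (h : (A.submatrix f g).det ≠ 0) : |(A.submatrix f g).det| = 1 := by
  obtain ⟨σ, hσ⟩ := (isTotallyUnimodular_iff_fintype A).mp hA τ f g
  rw [← hσ] at h ⊢
  cases σ <;> simp at h ⊢

variable [Fintype ι]

theorem submatrix_subtype_val_mulVec {R : Type*} [NonUnitalNonAssocSemiring R] (A : Matrix κ ι R)
    {p : ι → Prop} [DecidablePred p] {w : ι → R} (hw : ∀ j, ¬ p j → w j = 0) :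
    A.submatrix id (Subtype.val : Subtype p → ι) *ᵥ (fun j => w j) = A *ᵥ w := by
  ext i
  exact (Finset.sum_subtype (univ.filter p) (by simp) fun j => A i j * w j).symm.trans
    (Finset.sum_filter_of_ne fun j _ h => not_imp_comm.mp (hw j) (right_ne_zero_of_mul h))

theorem exists_det_submatrix_ne_zero {K : Type*} [Field K] [Fintype κ] [DecidableEq ι]
    (M : Matrix κ ι K) (hM : Function.Injective M.mulVec) :
    ∃ f : ι → κ, (M.submatrix f id).det ≠ 0 := by
  have hrank : M.rank = Fintype.card ι := by
    rw [← rank_transpose]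
    exact LinearIndependent.rank_matrix (by rwa [row_transpose, ← mulVec_injective_iff])
  have hspan : Submodule.span K (Set.range M.row) = ⊤ := by
    apply Submodule.eq_top_of_finrank_eq
    rw [← rank_eq_finrank_span_row, hrank, Module.finrank_fintype_fun_eq_card]
  obtain ⟨τ, a, -, hspan', hli⟩ := exists_linearIndependent' K M.row
  let b := Module.Basis.mk hli (by rw [hspan', hspan])
  have : Fintype τ := FiniteDimensional.fintypeBasisIndex b
  let e : τ ≃ ι := Fintype.equivOfCardEq (by
    rw [← Module.finrank_eq_card_basis b, Module.finrank_fintype_fun_eq_card])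
  have hunit : IsUnit (M.submatrix (a ∘ e.symm) id) :=
    linearIndependent_rows_iff_isUnit.mp (hli.comp e.symm e.symm.injective)
  exact ⟨a ∘ e.symm, ((isUnit_iff_isUnit_det _).mp hunit).ne_zero⟩

/-- Cramer's rule on a nonsingular square submatrix writes `y t / y s` as a ratio of two minors,
both `±1` by total unimodularity. -/
theorem IsTotallyUnimodular.abs_eq_abs_of_mulVec_eq_zero [Fintype κ] [DecidableEq ι]
    {A : Matrix κ ι ℝ} (hA : A.IsTotallyUnimodular) {y : ι → ℝ} (hy : A *ᵥ y = 0) {s : ι}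
    (hinj : Function.Injective
      (A.submatrix id (Subtype.val : {j // y j ≠ 0 ∧ j ≠ s} → ι)).mulVec)
    {t : ι} (ht : y t ≠ 0) : |y t| = |y s| := by
  by_cases hts : t = s
  · rw [hts]
  set T := {j // y j ≠ 0 ∧ j ≠ s}
  obtain ⟨f, hdet⟩ := exists_det_submatrix_ne_zero _ hinj
  set B : Matrix T T ℝ := A.submatrix f Subtype.val
  replace hdet : B.det ≠ 0 := by simpa [submatrix_submatrix] using hdet
  have hB : B *ᵥ (fun j : T => y j) = -(y s) • fun i => A (f i) s := by
    set z := y - Pi.single s (y s)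
    have hz : ∀ j, ¬ (y j ≠ 0 ∧ j ≠ s) → z j = 0 := fun j hj => by
      by_cases hjs : j = s
      · simp [z, hjs]
      · simp_all [z]
    have hyz : (fun j : T => y j) = fun j : T => z j := funext fun j => by simp [z, j.2.2]
    have hAz : A *ᵥ z = -(y s) • A.col s := by simp [z, mulVec_sub, mulVec_single, hy]
    ext i
    have := congrFun (submatrix_subtype_val_mulVec (A.submatrix f id) hz) i
    simp only [submatrix_submatrix, Function.comp_id, Function.id_comp] at this
    rw [hyz, this]
    exact congrFun hAz (f i)
  have hcramer : B.det * y t =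
      -(y s) * (A.submatrix f (Function.update Subtype.val ⟨t, ht, hts⟩ s)).det := by
    have := congrFun (cramer_eq_adjugate_mulVec B (B *ᵥ fun j : T => y j)) ⟨t, ht, hts⟩
    rw [mulVec_mulVec, adjugate_mul, smul_mulVec, one_mulVec, hB, _root_.map_smul] at this
    simp only [Pi.smul_apply, smul_eq_mul, cramer_apply] at this
    rw [← this]
    congr 2
    ext i j
    simp only [updateCol_apply, submatrix_apply, Function.update_apply, B]
    split_ifs <;> rfl
  have hne : (A.submatrix f (Function.update Subtype.val ⟨t, ht, hts⟩ s)).det ≠ 0 := by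
    intro h
    rw [h, mul_zero] at hcramer
    exact mul_ne_zero hdet ht hcramer
  have habs := congrArg abs hcramer
  rwa [abs_mul, abs_mul, hA.abs_det_submatrix_eq_one hdet, hA.abs_det_submatrix_eq_one hne,
    one_mul, mul_one, abs_neg] at habs

end Matrix

theorem IsElementary.smul {V : Submodule ℝ (Fin n → ℝ)} {y : Fin n → ℝ} (hy : IsElementary V y)
    {a : ℝ} (ha : a ≠ 0) : IsElementary V (a • y) :=
  ⟨V.smul_mem a hy.1, smul_ne_zero ha hy.2.1, by rw [supp_smul ha]; exact hy.2.2⟩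

theorem IsElementary.injective_mulVec_submatrix {κ : Type*} [Fintype κ]
    {A : Matrix κ (Fin n) ℝ} {y : Fin n → ℝ} (hy : IsElementary (LinearMap.ker A.mulVecLin) y)
    {s : Fin n} (hs : y s ≠ 0) :
    Function.Injective
      (A.submatrix id (Subtype.val : {j // y j ≠ 0 ∧ j ≠ s} → Fin n)).mulVec := by
  classical
  refine (injective_iff_map_eq_zero (A.submatrix id _).mulVecLin).mpr fun β hβ => ?_
  set w : Fin n → ℝ := fun j => if h : y j ≠ 0 ∧ j ≠ s then β ⟨j, h⟩ else 0
  have hwT : ∀ j, ¬ (y j ≠ 0 ∧ j ≠ s) → w j = 0 := fun j hj => dif_neg hj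
  have hwβ : (fun j : {j // y j ≠ 0 ∧ j ≠ s} => w j) = β := funext fun j => dif_pos j.2
  have hw : w ∈ LinearMap.ker A.mulVecLin := by
    rw [LinearMap.mem_ker, Matrix.mulVecLin_apply, ← Matrix.submatrix_subtype_val_mulVec A hwT,
      hwβ]
    exact hβ
  have hw0 : w = 0 := by
    by_contra hw0
    refine hy.2.2 w hw hw0 ⟨fun j hj => (not_imp_comm.mp (hwT j) hj).1, fun h => ?_⟩
    exact (not_imp_comm.mp (hwT s) (h hs)).2 rfl
  rw [← hwβ, hw0]
  rfl

theorem IsElementary.abs_eq_of_isRegularSpace {V : Submodule ℝ (Fin n → ℝ)}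
    (hV : IsRegularSpace V) {y : Fin n → ℝ} (hy : IsElementary V y) {s t : Fin n}
    (hs : y s ≠ 0) (ht : y t ≠ 0) : |y t| = |y s| := by
  obtain ⟨m, A, hA, rfl⟩ := hV
  exact hA.abs_eq_abs_of_mulVec_eq_zero hy.1 (hy.injective_mulVec_submatrix hs) ht

theorem IsElementary.exists_pos_smul_isPrimitive {V : Submodule ℝ (Fin n → ℝ)}
    (hV : IsRegularSpace V) {y : Fin n → ℝ} (hy : IsElementary V y) :
    ∃ β : ℝ, 0 < β ∧ IsPrimitive V (β • y) := by
  obtain ⟨s, hs⟩ := Function.ne_iff.mp hy.2.1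
  have hys : 0 < |y s| := abs_pos.mpr hs
  refine ⟨|y s|⁻¹, inv_pos.mpr hys, hy.smul (inv_ne_zero hys.ne'), fun j => ?_⟩
  rcases eq_or_ne (y j) 0 with hj | hj
  · simp [hj]
  · have h : |(|y s|⁻¹ • y) j| = 1 := by
      rw [Pi.smul_apply, smul_eq_mul, abs_mul, abs_inv, abs_abs,
        hy.abs_eq_of_isRegularSpace hV hs hj, inv_mul_cancel₀ hys.ne']
    rcases (abs_eq zero_le_one).mp h with h | h <;> simp [h]

theorem IsRegularSpace.hasConformalDecomp {V : Submodule ℝ (Fin n → ℝ)} (hV : IsRegularSpace V)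
    {x : Fin n → ℝ} (hx : x ∈ V) : HasConformalDecomp (IsPrimitive V) x := by
  obtain ⟨k, α, p, hp, hsum⟩ := hasConformalDecomp_isElementary V hx
  choose β hβ hβp using fun i => (hp i).2.1.exists_pos_smul_isPrimitive hV
  refine ⟨k, fun i => α i / β i, fun i => β i • p i,
    fun i => ⟨div_pos (hp i).1 (hβ i), hβp i, (hp i).2.2.smul_left (hβ i)⟩, ?_⟩
  rw [← hsum]
  exact Finset.sum_congr rfl fun i _ => by rw [smul_smul, div_mul_cancel₀ _ (hβ i).ne']

theorem Finset.abs_sum_eq_sum_abs_of_mul_sum_pos {ι : Type*} (s : Finset ι) (f : ι → ℝ)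
    (h : ∀ i ∈ s, f i ≠ 0 → 0 < f i * ∑ j ∈ s, f j) : |∑ i ∈ s, f i| = ∑ i ∈ s, |f i| := by
  rcases le_total 0 (∑ j ∈ s, f j) with hs | hs
  · have hf : ∀ i ∈ s, 0 ≤ f i := fun i hi => by
      by_contra! hneg
      nlinarith [h i hi hneg.ne]
    rw [abs_of_nonneg hs]
    exact sum_congr rfl fun i hi => (abs_of_nonneg (hf i hi)).symm
  · have hf : ∀ i ∈ s, f i ≤ 0 := fun i hi => by
      by_contra! hpos
      nlinarith [h i hi hpos.ne']
    rw [abs_of_nonpos hs, ← sum_neg_distrib]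
    exact sum_congr rfl fun i hi => (abs_of_nonpos (hf i hi)).symm

theorem onorm_nonneg (x : Fin n → ℝ) : 0 ≤ onorm x := sum_nonneg fun j _ => abs_nonneg (x j)

theorem onorm_add_lt_of_mul_neg {x y : Fin n → ℝ} {j : Fin n} (h : x j * y j < 0) :
    onorm (x + y) < onorm x + onorm y := by
  rw [onorm, onorm, onorm, ← sum_add_distrib]
  refine sum_lt_sum (fun j _ => abs_add_le _ _) ⟨j, mem_univ j, ?_⟩
  refine (abs_add_le _ _).lt_of_ne fun heq => ?_
  rcases (abs_add_eq_add_abs_iff _ _).mp heq with ⟨h₁, h₂⟩ | ⟨h₁, h₂⟩ <;> nlinarith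

theorem onorm_eq_sum_of_conforms {x : Fin n → ℝ} {k : ℕ} {α : Fin k → ℝ}
    {p : Fin k → Fin n → ℝ} (hα : ∀ i, 0 < α i) (hp : ∀ i, Conforms (p i) x)
    (hsum : ∑ i, α i • p i = x) : onorm x = ∑ i, α i * onorm (p i) := by
  have hx : ∀ j, x j = ∑ i, α i * p i j := fun j => by simp [← hsum, Finset.sum_apply]
  simp only [onorm, Finset.mul_sum]
  rw [Finset.sum_comm]
  refine sum_congr rfl fun j _ => ?_
  rw [hx j, abs_sum_eq_sum_abs_of_mul_sum_pos]
  · exact sum_congr rfl fun i _ => by rw [abs_mul, abs_of_pos (hα i)]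
  · intro i _ hne
    rw [← hx j, mul_assoc]
    exact mul_pos (hα i) (hp i j (right_ne_zero_of_mul hne))

theorem Feasible.add_smul_of_le {c : Fin n → ℝ} {r : Fin n} {f P : Fin n → ℝ} {ε δ : ℝ}
    (hf : Feasible c r f) (hε : Feasible c r (f + ε • P)) (hδ : 0 ≤ δ) (hδε : δ ≤ ε) :
    Feasible c r (f + δ • P) := by
  intro j hj
  obtain ⟨h₁, h₂⟩ := hf j hj
  obtain ⟨h₃, h₄⟩ := hε j hj
  simp only [Pi.add_apply, Pi.smul_apply, smul_eq_mul] at h₃ h₄ ⊢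
  rcases le_total 0 (P j) with hP | hP <;> constructor <;> nlinarith

theorem eq_zero_or_eq_or_eq_of_mul_add_pos {a b c : ℝ} (ha : a ∈ ({-1, 0, 1} : Set ℝ))
    (hb : b ∈ ({-1, 0, 1} : Set ℝ)) (hc : c ∈ ({-1, 0, 1} : Set ℝ))
    (h : a ≠ 0 → 0 < a * (b + c)) : a = 0 ∨ a = b ∨ a = c := by
  simp only [Set.mem_insert_iff, Set.mem_singleton_iff] at ha hb hc
  rcases ha with rfl | rfl | rfl <;> rcases hb with rfl | rfl | rfl <;>
    rcases hc with rfl | rfl | rfl <;> revert h <;> norm_num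

/-- On each coordinate `p` vanishes or agrees with `P` or with `Q`. -/
theorem Augmenting.of_conforms_add {V : Submodule ℝ (Fin n → ℝ)} {c : Fin n → ℝ} {r : Fin n}
    {f P Q p : Fin n → ℝ} (hf : Feasible c r f) (hP : Augmenting V c r f P)
    (hQ : Augmenting V c r f Q) (hp : IsRPath V r p) (hpPQ : Conforms p (P + Q)) :
    Augmenting V c r f p := by
  obtain ⟨hPr, εP, hεP, hfP⟩ := hP
  obtain ⟨hQr, εQ, hεQ, hfQ⟩ := hQ
  have hε : 0 < min εP εQ := lt_min hεP hεQ
  have hfP' := hf.add_smul_of_le hfP hε.le (min_le_left _ _)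
  have hfQ' := hf.add_smul_of_le hfQ hε.le (min_le_right _ _)
  refine ⟨hp, min εP εQ, hε, fun j hj => ?_⟩
  show 0 ≤ f j + min εP εQ * p j ∧ f j + min εP εQ * p j ≤ c j
  rcases eq_zero_or_eq_or_eq_of_mul_add_pos (hp.1.2 j) (hPr.1.2 j) (hQr.1.2 j) (hpPQ j) with
    h | h | h <;> rw [h]
  · simpa using hf j hj
  · exact hfP' j hj
  · exact hfQ' j hj

theorem sum_coeff_filter_eq_apply {V : Submodule ℝ (Fin n → ℝ)} {x : Fin n → ℝ} {r : Fin n}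
    {k : ℕ} {α : Fin k → ℝ} {p : Fin k → Fin n → ℝ} (hp : ∀ i, IsPrimitive V (p i))
    (hpx : ∀ i, Conforms (p i) x) (hsum : ∑ i, α i • p i = x) (hxr : 0 ≤ x r) :
    ∑ i ∈ univ.filter (fun i => p i r = 1), α i = x r := by
  rw [← hsum, Finset.sum_apply, sum_filter]
  refine sum_congr rfl fun i _ => ?_
  have hpr := (hp i).2 r
  simp only [Set.mem_insert_iff, Set.mem_singleton_iff] at hpr
  rcases hpr with h | h | h
  · have := hpx i r (by norm_num [h])
    rw [h] at this
    linarith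
  · simp [h]
  · simp [h]

theorem ShortestAug.onorm_add_le_sum {V : Submodule ℝ (Fin n → ℝ)} {c : Fin n → ℝ} {r : Fin n}
    {f P Q : Fin n → ℝ} (hf : Feasible c r f) (hP : ShortestAug V c r f P)
    (hQ : ShortestAug V c r f Q) {k : ℕ} {α : Fin k → ℝ} {p : Fin k → Fin n → ℝ}
    (hp : ∀ i, 0 < α i ∧ IsPrimitive V (p i) ∧ Conforms (p i) (P + Q))
    (hsum : ∑ i, α i • p i = P + Q) : onorm P + onorm Q ≤ ∑ i, α i * onorm (p i) := by
  set F := univ.filter fun i => p i r = 1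
  have hF : ∑ i ∈ F, α i = 2 := by
    rw [sum_coeff_filter_eq_apply (fun i => (hp i).2.1) (fun i => (hp i).2.2) hsum] <;>
      norm_num [hP.1.1.2, hQ.1.1.2]
  have hshort : ∀ i ∈ F, onorm P + onorm Q ≤ 2 * onorm (p i) := fun i hi => by
    have hpi := hP.1.of_conforms_add hf hQ.1 ⟨(hp i).2.1, (mem_filter.mp hi).2⟩ (hp i).2.2
    linarith [hP.2 _ hpi, hQ.2 _ hpi]
  calc onorm P + onorm Q = ∑ i ∈ F, α i * ((onorm P + onorm Q) / 2) := by
        rw [← sum_mul, hF]; ring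
    _ ≤ ∑ i ∈ F, α i * onorm (p i) := sum_le_sum fun i hi =>
        mul_le_mul_of_nonneg_left (by linarith [hshort i hi]) (hp i).1.le
    _ ≤ ∑ i, α i * onorm (p i) := sum_le_sum_of_subset_of_nonneg (subset_univ F)
        fun i _ _ => mul_nonneg (hp i).1.le (onorm_nonneg _)

theorem stmt11_general (V : Submodule ℝ (Fin n → ℝ)) (hV : IsRegularSpace V)
    (r : Fin n) (c : Fin n → ℝ)
    (f : Fin n → ℝ) (hf : Feasible c r f)
    (P Q : Fin n → ℝ)
    (hP : ShortestAug V c r f P) (hQ : ShortestAug V c r f Q) :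
    ∀ j, 0 ≤ P j * Q j := by
  intro j
  by_contra! hneg
  obtain ⟨k, α, p, hp, hsum⟩ := hV.hasConformalDecomp (add_mem hP.1.1.1.1.1 hQ.1.1.1.1.1)
  have hlt := onorm_add_lt_of_mul_neg hneg
  rw [onorm_eq_sum_of_conforms (fun i => (hp i).1) (fun i => (hp i).2.2) hsum] at hlt
  linarith [hP.onorm_add_le_sum hf hQ hp hsum]

theorem stmt11 (V : Submodule ℝ (Fin n → ℝ)) (hV : IsRegularSpace V)
    (r : Fin n) (c : Fin n → ℝ) (hc : ∀ j, j ≠ r → 0 ≤ c j)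
    (f : Fin n → ℝ) (hfV : f ∈ V) (hf : Feasible c r f)
    (P Q : Fin n → ℝ)
    (hP : ShortestAug V c r f P) (hQ : ShortestAug V c r f Q) :
    ∀ j, 0 ≤ P j * Q j :=
  stmt11_general V hV r c f hf P Q hP hQ
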